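/- Let K be a field with char K = 2. Then the K-algebras Γ = K⟨α,β⟩/(α², β², αβ−βα) and Λ = K⟨a,b⟩/(ab, ba, a²−b²) are not isomorphic. -/

import Mathlib

open FreeAlgebra

/-- Relations of `Γ(1,1;1) = K⟨α,β⟩/(α², β², αβ - βα)`. -/
def gammaRel (K : Type*) [Field K] : FreeAlgebra K (Fin 2) → FreeAlgebra K (Fin 2) → Prop :=
  fun x y =>
    (x = ι K 0 * ι K 0 ∧ y = 0) ∨ (x = ι K 1 * ι K 1 ∧ y = 0) ∨
    (x = ι K 0 * ι K 1 ∧ y = ι K 1 * ι K 0)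

/-- Relations of `Λ(1,1;2,2) = K⟨a,b⟩/(ab, ba, a² - b²)`. -/
def lambdaRel (K : Type*) [Field K] : FreeAlgebra K (Fin 2) → FreeAlgebra K (Fin 2) → Prop :=
  fun x y =>
    (x = ι K 0 * ι K 1 ∧ y = 0) ∨ (x = ι K 1 * ι K 0 ∧ y = 0) ∨
    (x = ι K 0 * ι K 0 ∧ y = ι K 1 * ι K 1)

/-!
`Γ` is commutative and generated by two square-zero elements. In a commutative algebra with
`2 = 0`, squaring is additive and multiplicative, so every square in `Γ` is a scalar. This
property passes through algebra isomorphisms, but fails in `Λ`: the regular representation of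
`Λ` sends `a²` to a nonzero off-diagonal matrix.
-/

theorem Algebra.commute_of_mem_adjoin_of_pairwise_commute {R A : Type*} [CommSemiring R]
    [Semiring A] [Algebra R A] {s : Set A} (hcomm : ∀ x ∈ s, ∀ y ∈ s, Commute x y) {x y : A}
    (hx : x ∈ Algebra.adjoin R s) (hy : y ∈ Algebra.adjoin R s) : Commute x y :=
  Algebra.commute_of_mem_adjoin_of_forall_mem_commute hy fun b hb =>
    (Algebra.commute_of_mem_adjoin_of_forall_mem_commute hx fun a ha => hcomm b hb a ha).symm

theorem Algebra.sq_mem_bot_of_mem_adjoin {R A : Type*} [CommSemiring R] [Semiring A]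
    [Algebra R A] (h2 : (2 : A) = 0) {s : Set A} (hcomm : ∀ x ∈ s, ∀ y ∈ s, Commute x y)
    (hsq : ∀ x ∈ s, x ^ 2 ∈ (⊥ : Subalgebra R A)) {x : A} (hx : x ∈ Algebra.adjoin R s) :
    x ^ 2 ∈ (⊥ : Subalgebra R A) := by
  induction hx using Algebra.adjoin_induction with
  | mem x hx => exact hsq x hx
  | algebraMap r => exact pow_mem (Subalgebra.algebraMap_mem _ r) 2
  | add x y hx hy hx2 hy2 =>
    rw [(Algebra.commute_of_mem_adjoin_of_pairwise_commute hcomm hx hy).add_sq, mul_assoc, h2,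
      zero_mul, add_zero]
    exact add_mem hx2 hy2
  | mul x y hx hy hx2 hy2 =>
    rw [(Algebra.commute_of_mem_adjoin_of_pairwise_commute hcomm hx hy).mul_pow]
    exact mul_mem hx2 hy2

theorem RingQuot.adjoin_range_mkAlgHom_ι {R X : Type*} [CommSemiring R]
    (s : FreeAlgebra R X → FreeAlgebra R X → Prop) :
    Algebra.adjoin R (Set.range fun x => RingQuot.mkAlgHom R s (ι R x)) = ⊤ := by
  rw [Set.range_comp', Algebra.adjoin_image, FreeAlgebra.adjoin_range_ι, Algebra.map_top,
    AlgHom.range_eq_top]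
  exact RingQuot.mkAlgHom_surjective R s

theorem Matrix.single_notMem_bot {R n : Type*} [CommSemiring R] [Fintype n] [DecidableEq n]
    {i j : n} (hij : i ≠ j) {c : R} (hc : c ≠ 0) :
    Matrix.single i j c ∉ (⊥ : Subalgebra R (Matrix n n R)) := by
  rintro ⟨r, hr⟩
  apply hc
  simpa [Matrix.algebraMap_eq_diagonal, hij] using (congrFun (congrFun hr i) j).symm

theorem map_mem_bot {R A B F : Type*} [CommSemiring R] [Semiring A] [Semiring B] [Algebra R A]
    [Algebra R B] [FunLike F A B] [AlgHomClass F R A B] (f : F) {x : A}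
    (hx : x ∈ (⊥ : Subalgebra R A)) : f x ∈ (⊥ : Subalgebra R B) := by
  obtain ⟨c, rfl⟩ := hx
  exact ⟨c, (AlgHomClass.commutes f c).symm⟩

section Gamma

variable (K : Type*) [Field K]

theorem gammaRel_generators_commute :
    ∀ x ∈ Set.range (fun i => RingQuot.mkAlgHom K (gammaRel K) (ι K i)),
      ∀ y ∈ Set.range (fun i => RingQuot.mkAlgHom K (gammaRel K) (ι K i)), Commute x y := by
  have h01 : Commute (RingQuot.mkAlgHom K (gammaRel K) (ι K 0))
      (RingQuot.mkAlgHom K (gammaRel K) (ι K 1)) := by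
    rw [Commute, SemiconjBy, ← map_mul, ← map_mul]
    exact RingQuot.mkAlgHom_rel K (Or.inr (Or.inr ⟨rfl, rfl⟩))
  rintro _ ⟨i, rfl⟩ _ ⟨j, rfl⟩
  fin_cases i <;> fin_cases j
  exacts [Commute.refl _, h01, h01.symm, Commute.refl _]

theorem gammaRel_generator_sq (i : Fin 2) :
    RingQuot.mkAlgHom K (gammaRel K) (ι K i) ^ 2 = 0 := by
  rw [sq, ← map_mul, ← map_zero (RingQuot.mkAlgHom K (gammaRel K))]
  apply RingQuot.mkAlgHom_rel
  fin_cases i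
  exacts [Or.inl ⟨rfl, rfl⟩, Or.inr (Or.inl ⟨rfl, rfl⟩)]

theorem gammaRel_sq_mem_bot (hchar : ringChar K = 2) (x : RingQuot (gammaRel K)) :
    x ^ 2 ∈ (⊥ : Subalgebra K (RingQuot (gammaRel K))) := by
  have : CharP K 2 := ringChar.of_eq hchar
  refine Algebra.sq_mem_bot_of_mem_adjoin ?_ (gammaRel_generators_commute K) ?_
    (RingQuot.adjoin_range_mkAlgHom_ι (gammaRel K) ▸ Algebra.mem_top)
  · exact (map_ofNat (algebraMap K _) 2).symm.trans
      ((congrArg _ CharTwo.two_eq_zero).trans (map_zero _))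
  · rintro _ ⟨i, rfl⟩
    rw [gammaRel_generator_sq]
    exact zero_mem _

end Gamma

section Lambda

open Matrix

variable (K : Type*) [Field K]

/-- The regular representation of `Λ` in the basis `1, a, b, a²`. -/
def lambdaRelRegularRep : RingQuot (lambdaRel K) →ₐ[K] Matrix (Fin 4) (Fin 4) K :=
  RingQuot.liftAlgHom K
    ⟨FreeAlgebra.lift K ![single 1 0 1 + single 3 1 1, single 2 0 1 + single 3 2 1], by
      rintro x y (⟨rfl, rfl⟩ | ⟨rfl, rfl⟩ | ⟨rfl, rfl⟩) <;>
        simp [add_mul, mul_add, single_mul_single_of_ne, single_mul_single_same]⟩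

theorem lambdaRelRegularRep_sq :
    lambdaRelRegularRep K (RingQuot.mkAlgHom K (lambdaRel K) (ι K 0) ^ 2) = single 3 0 1 := by
  simp [lambdaRelRegularRep, sq, add_mul, mul_add, single_mul_single_of_ne, single_mul_single_same]

theorem lambdaRel_sq_notMem_bot :
    RingQuot.mkAlgHom K (lambdaRel K) (ι K 0) ^ 2 ∉
      (⊥ : Subalgebra K (RingQuot (lambdaRel K))) := by
  intro h
  apply single_notMem_bot (show (3 : Fin 4) ≠ 0 by decide) (one_ne_zero : (1 : K) ≠ 0)
  exact lambdaRelRegularRep_sq K ▸ map_mem_bot (lambdaRelRegularRep K) h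

end Lambda

/-- In characteristic 2, the algebras `K⟨α,β⟩/(α², β², αβ-βα)` and
`K⟨a,b⟩/(ab, ba, a²-b²)` are not isomorphic. -/
theorem stmt12 (K : Type*) [Field K] (hchar : ringChar K = 2) :
    IsEmpty (RingQuot (gammaRel K) ≃ₐ[K] RingQuot (lambdaRel K)) := by
  refine ⟨fun e => lambdaRel_sq_notMem_bot K ?_⟩
  have := gammaRel_sq_mem_bot K hchar (e.symm (RingQuot.mkAlgHom K (lambdaRel K) (ι K 0)))
  simpa using map_mem_bot e this
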